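/- arXiv:2412.15457 — 2 statements merged into one kernel-verified Lean document; each statement's English description precedes it below -/
import Mathlib

section
/- Let G on vertex set V (|V| = n ≥ 2) be the disjoint union of n−1 spanning arborescences A_1,...,A_{n−1} such that at most one vertex of V is the root of two or more of the A_i. Then G contains a rainbow spanning arborescence. -/
open Finset

variable {V : Type*}

/-- `A` is the arc set of an arborescence on vertex set `U` rooted at `r`:
all arcs lie within `U`, the root has no incoming arc, every other vertex of `U`
has exactly one incoming arc, and every vertex of `U` is reachable from `r`. -/
def IsArborOn [DecidableEq V] (U : Finset V) (A : Finset (V × V)) (r : V) : Prop :=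
  r ∈ U ∧ (∀ e ∈ A, e.1 ∈ U ∧ e.2 ∈ U) ∧ (∀ e ∈ A, e.2 ≠ r) ∧
  (∀ v ∈ U, v ≠ r → (A.filter (fun e => e.2 = v)).card = 1) ∧
  (∀ v ∈ U, Relation.ReflTransGen (fun a b => (a, b) ∈ A) r v)

/-- A spanning arborescence on the whole (finite) vertex type. -/
def IsSpanningArbor [Fintype V] [DecidableEq V] (A : Finset (V × V)) (r : V) : Prop :=
  IsArborOn Finset.univ A r

/-- `B` is rainbow w.r.t. the colored arc sets `A 0, …, A (k-1)`:
each arc of `B` can be assigned a color whose class contains it, with all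
assigned colors distinct (i.e. at most one arc from each color). -/
def IsRainbowOf {k : ℕ} (A : Fin k → Finset (V × V)) (B : Finset (V × V)) : Prop :=
  ∃ c : V × V → Fin k, Set.InjOn c ↑B ∧ ∀ e ∈ B, e ∈ A (c e)

/-!
Grow a rainbow arborescence greedily from a vertex `v₀` such that every other vertex is the root
of at most one `A i`. Let `B` be a rainbow arborescence on `S ∋ v₀` with root `ρ`. If an unused
colour `i` is rooted in `S`, the spanning arborescence `A i` has an arc leaving `S`; add it.
Otherwise, as the roots outside `S` are distinct, counting shows that the `|S| - 1` used colours
are exactly the colours rooted in `S`, so some unused colour `i` is rooted outside `S`, and `A i`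
has an arc `(t, ρ)`. If `t ∉ S`, add it as a new root. If `t ∈ S`, let it replace the arc of `B`
entering `t`; the colour of that arc is rooted in `S`, so it can be spent on an arc leaving `S`.
-/

namespace Relation.ReflTransGen

variable {α : Type*} {R : α → α → Prop} {a b : α}

lemma exists_step_leaving {S : Set α} (h : ReflTransGen R a b) (ha : a ∈ S) (hb : b ∉ S) :
    ∃ x y, R x y ∧ x ∈ S ∧ y ∉ S := by
  induction h with
  | refl => exact absurd ha hb
  | @tail x y _ hxy ih =>
    by_cases hx : x ∈ S
    · exact ⟨x, y, hxy, hx, hb⟩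
    · exact ih hx

lemma exists_ne_rel_of_ne (h : ReflTransGen R a b) (hab : a ≠ b) : ∃ t ≠ b, R t b := by
  induction h with
  | refl => exact absurd rfl hab
  | @tail x y _ hxy ih =>
    by_cases hxy' : x = y
    · subst hxy'
      exact ih hab
    · exact ⟨x, hxy', hxy⟩

end Relation.ReflTransGen

namespace IsArborOn

variable [DecidableEq V] {S : Finset V} {B : Finset (V × V)} {ρ : V}

lemma notMem_of_snd_notMem (h : IsArborOn S B ρ) {e : V × V} (he : e.2 ∉ S) : e ∉ B :=
  fun heB => he (h.2.1 e heB).2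

lemma card_add_one (h : IsArborOn S B ρ) : B.card + 1 = S.card := by
  obtain ⟨hρ, hsub, hroot, hdeg, -⟩ := h
  have hin : ∀ v ∈ S.erase ρ, ∃ e, B.filter (fun e => e.2 = v) = {e} := fun v hv =>
    card_eq_one.mp (hdeg v (mem_of_mem_erase hv) (ne_of_mem_erase hv))
  have : B.card = (S.erase ρ).card := by
    refine card_bij (fun e _ => e.2) (fun e he => mem_erase.mpr ⟨hroot e he, (hsub e he).2⟩)
      (fun e he f hf hef => ?_) (fun v hv => ?_)
    · obtain ⟨a, ha⟩ := hin e.2 (mem_erase.mpr ⟨hroot e he, (hsub e he).2⟩)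
      have he' : e ∈ B.filter (fun x => x.2 = e.2) := mem_filter.mpr ⟨he, rfl⟩
      have hf' : f ∈ B.filter (fun x => x.2 = e.2) := mem_filter.mpr ⟨hf, hef.symm⟩
      rw [ha, mem_singleton] at he' hf'
      rw [he', hf']
    · obtain ⟨a, ha⟩ := hin v hv
      obtain ⟨haB, hav⟩ := mem_filter.mp (ha ▸ mem_singleton_self a)
      exact ⟨a, haB, hav⟩
  rw [this, card_erase_add_one hρ]

lemma singleton (v : V) : IsArborOn {v} ∅ v :=
  ⟨mem_singleton_self v, by simp, by simp,
    fun _ hw hne => absurd (mem_singleton.mp hw) hne,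
    fun _ hw => mem_singleton.mp hw ▸ Relation.ReflTransGen.refl⟩

lemma exists_arc_leaving (h : IsArborOn S B ρ) {T : Finset V} (hρ : ρ ∈ T) {v : V} (hvS : v ∈ S)
    (hvT : v ∉ T) : ∃ e ∈ B, e.1 ∈ T ∧ e.2 ∉ T := by
  obtain ⟨x, y, hxy, hx, hy⟩ :=
    (h.2.2.2.2 v hvS).exists_step_leaving (S := (T : Set V)) hρ hvT
  exact ⟨(x, y), hxy, hx, hy⟩

lemma exists_arc_into (h : IsArborOn S B ρ) {v : V} (hvS : v ∈ S) (hv : v ≠ ρ) :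
    ∃ t ≠ v, (t, v) ∈ B :=
  (h.2.2.2.2 v hvS).exists_ne_rel_of_ne (Ne.symm hv)

end IsArborOn

namespace IsArborOn

lemma reach_mono {B B' : Finset (V × V)} (hB : B ⊆ B') {a b : V}
    (h : Relation.ReflTransGen (fun x y => (x, y) ∈ B) a b) :
    Relation.ReflTransGen (fun x y => (x, y) ∈ B') a b :=
  Relation.ReflTransGen.mono (fun _ _ hxy => hB hxy) _ _ h

variable [DecidableEq V] {S : Finset V} {B : Finset (V × V)} {ρ : V}

lemma insert_leaf (h : IsArborOn S B ρ) {e : V × V} (he1 : e.1 ∈ S) (he2 : e.2 ∉ S) :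
    IsArborOn (insert e.2 S) (insert e B) ρ := by
  obtain ⟨hρ, hsub, hroot, hdeg, hreach⟩ := h
  refine ⟨mem_insert_of_mem hρ, ?_, ?_, ?_, ?_⟩
  · rintro f hf
    rcases mem_insert.mp hf with rfl | hf
    · exact ⟨mem_insert_of_mem he1, mem_insert_self _ _⟩
    · exact ⟨mem_insert_of_mem (hsub f hf).1, mem_insert_of_mem (hsub f hf).2⟩
  · rintro f hf
    rcases mem_insert.mp hf with rfl | hf
    · exact fun hc => he2 (hc ▸ hρ)
    · exact hroot f hf
  · intro u hu huρ
    rcases mem_insert.mp hu with rfl | hu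
    · have : B.filter (fun f => f.2 = e.2) = ∅ :=
        filter_eq_empty_iff.mpr fun f hf hc => he2 (hc ▸ (hsub f hf).2)
      rw [filter_insert, if_pos rfl, this]
      rfl
    · rw [filter_insert, if_neg fun (hc : e.2 = u) => he2 (hc ▸ hu)]
      exact hdeg u hu huρ
  · intro u hu
    rcases mem_insert.mp hu with rfl | hu
    · exact (reach_mono (subset_insert _ _) (hreach e.1 he1)).tail (mem_insert_self e B)
    · exact reach_mono (subset_insert _ _) (hreach u hu)

lemma insert_root (h : IsArborOn S B ρ) {t : V} (ht : t ∉ S) :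
    IsArborOn (insert t S) (insert (t, ρ) B) t := by
  obtain ⟨hρ, hsub, hroot, hdeg, hreach⟩ := h
  refine ⟨mem_insert_self _ _, ?_, ?_, ?_, ?_⟩
  · rintro f hf
    rcases mem_insert.mp hf with rfl | hf
    · exact ⟨mem_insert_self _ _, mem_insert_of_mem hρ⟩
    · exact ⟨mem_insert_of_mem (hsub f hf).1, mem_insert_of_mem (hsub f hf).2⟩
  · rintro f hf
    rcases mem_insert.mp hf with rfl | hf
    · exact fun (hc : ρ = t) => ht (hc ▸ hρ)
    · exact fun (hc : f.2 = t) => ht (hc ▸ (hsub f hf).2)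
  · intro u hu hut
    have hu : u ∈ S := (mem_insert.mp hu).resolve_left hut
    by_cases huρ : u = ρ
    · subst huρ
      have : B.filter (fun f => f.2 = u) = ∅ := filter_eq_empty_iff.mpr hroot
      rw [filter_insert, if_pos rfl, this]
      rfl
    · rw [filter_insert, if_neg (Ne.symm huρ)]
      exact hdeg u hu huρ
  · intro u hu
    rcases mem_insert.mp hu with rfl | hu
    · exact Relation.ReflTransGen.refl
    · exact .head (mem_insert_self _ _) (reach_mono (subset_insert _ _) (hreach u hu))

lemma exists_swap_root (h : IsArborOn S B ρ) {t : V} (ht : t ∈ S) (htρ : t ≠ ρ) :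
    ∃ b ∈ B, IsArborOn S (insert (t, ρ) (B.erase b)) t := by
  obtain ⟨hρ, hsub, hroot, hdeg, hreach⟩ := h
  obtain ⟨b, hb⟩ := card_eq_one.mp (hdeg t ht htρ)
  have hb_in : ∀ e ∈ B, e.2 = t ↔ e = b := fun e he => by
    simpa [he] using Finset.ext_iff.mp hb e
  obtain ⟨hbB, hbt⟩ := mem_filter.mp (hb ▸ mem_singleton_self b)
  refine ⟨b, hbB, ht, ?_, ?_, ?_, ?_⟩
  · rintro f hf
    rcases mem_insert.mp hf with rfl | hf
    · exact ⟨ht, hρ⟩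
    · exact hsub f (mem_of_mem_erase hf)
  · rintro f hf
    rcases mem_insert.mp hf with rfl | hf
    · exact Ne.symm htρ
    · exact fun hc => ne_of_mem_erase hf ((hb_in f (mem_of_mem_erase hf)).mp hc)
  · intro u hu hut
    by_cases huρ : u = ρ
    · subst huρ
      have : (B.erase b).filter (fun f => f.2 = u) = ∅ :=
        filter_eq_empty_iff.mpr fun f hf => hroot f (mem_of_mem_erase hf)
      rw [filter_insert, if_pos rfl, this]
      rfl
    · have hbu : b ∉ B.filter (fun f => f.2 = u) := fun hc => hut ((mem_filter.mp hc).2 ▸ hbt)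
      rw [filter_insert, if_neg (Ne.symm huρ), filter_erase, erase_eq_of_notMem hbu]
      exact hdeg u hu huρ
  · intro u hu
    -- every path from `ρ` either passes through `t`, or avoids the removed arc `b`
    suffices ∀ w, Relation.ReflTransGen (fun x y => (x, y) ∈ B) ρ w →
        Relation.ReflTransGen (fun x y => (x, y) ∈ insert (t, ρ) (B.erase b)) t w from
      this u (hreach u hu)
    intro w hw
    induction hw with
    | refl => exact .single (mem_insert_self _ _)
    | @tail x y _ hxy ih =>
      by_cases hy : y = t
      · exact hy ▸ Relation.ReflTransGen.refl
      · refine ih.tail (mem_insert_of_mem (mem_erase.mpr ⟨fun hc => hy ?_, hxy⟩))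
        exact (hb_in _ hxy).mpr hc

end IsArborOn

def IsRainbowColoring {k : ℕ} (A : Fin k → Finset (V × V)) (B : Finset (V × V))
    (c : V × V → Fin k) : Prop :=
  Set.InjOn c ↑B ∧ ∀ e ∈ B, e ∈ A (c e)

namespace IsRainbowColoring

variable {k : ℕ} {A : Fin k → Finset (V × V)} {B : Finset (V × V)} {c : V × V → Fin k}

lemma mono (h : IsRainbowColoring A B c) {B' : Finset (V × V)} (hB' : B' ⊆ B) :
    IsRainbowColoring A B' c :=
  ⟨h.1.mono (coe_subset.mpr hB'), fun e he => h.2 e (hB' he)⟩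

variable [DecidableEq V] {e : V × V} {i : Fin k}

lemma image_update_insert (he : e ∉ B) :
    (insert e B).image (Function.update c e i) = insert i (B.image c) := by
  rw [image_insert, Function.update_self]
  congr 1
  exact image_congr fun x hx => Function.update_of_ne (ne_of_mem_of_not_mem hx he) i c

lemma insert (h : IsRainbowColoring A B c) (he : e ∉ B) (heA : e ∈ A i) (hi : i ∉ B.image c) :
    IsRainbowColoring A (insert e B) (Function.update c e i) := by
  have hupd : Set.EqOn c (Function.update c e i) ↑B := fun x hx =>
    (Function.update_of_ne (ne_of_mem_of_not_mem hx he) i c).symm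
  refine ⟨?_, fun x hx => ?_⟩
  · rw [coe_insert, Set.injOn_insert (mem_coe.not.mpr he), Function.update_self]
    refine ⟨h.1.congr hupd, ?_⟩
    rintro ⟨x, hx, hxi⟩
    exact hi (mem_image.mpr ⟨x, hx, (hupd hx).trans hxi⟩)
  · rcases mem_insert.mp hx with rfl | hx
    · rwa [Function.update_self]
    · rw [← hupd hx]
      exact h.2 x hx

end IsRainbowColoring

lemma filter_root_mem_eq_of_card [Fintype V] [DecidableEq V] {k : ℕ} {r : Fin k → V}
    {S : Finset V} {I : Finset (Fin k)} (hk : k + 1 = Fintype.card V)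
    (hr : Set.InjOn r {i | r i ∉ S}) (hI : I.card + 1 = S.card) (hsub : ∀ i, r i ∈ S → i ∈ I) :
    univ.filter (fun i => r i ∈ S) = I := by
  refine eq_of_subset_of_card_le (fun i hi => hsub i (mem_filter.mp hi).2) ?_
  have hout : (univ.filter fun i => r i ∉ S).card ≤ Sᶜ.card :=
    card_le_card_of_injOn r (fun i hi => by simpa using hi) fun i hi j hj => hr (by simpa using hi)
      (by simpa using hj)
  have hsplit := card_filter_add_card_filter_not (s := (univ : Finset (Fin k))) (fun i => r i ∈ S)
  rw [card_univ, Fintype.card_fin] at hsplit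
  have := card_compl S
  have := card_le_univ S
  omega

lemma exists_injOn_root_ne {ι : Type*} [Fintype ι] [Fintype V] [DecidableEq V] [Nonempty V]
    {r : ι → V} (h : (univ.filter fun v => 2 ≤ (univ.filter fun i => r i = v).card).card ≤ 1) :
    ∃ v₀, Set.InjOn r {i | r i ≠ v₀} := by
  obtain ⟨v₀, hv₀⟩ := card_le_one_iff_subset_singleton.mp h
  refine ⟨v₀, fun i hi j _ hij => ?_⟩
  have : (univ.filter fun l => r l = r i).card ≤ 1 := by
    by_contra! h2
    exact hi (mem_singleton.mp (hv₀ (mem_filter.mpr ⟨mem_univ _, h2⟩)))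
  exact card_le_one.mp this i (by simp) j (by simp [hij])

def HasRainbowArborOn [DecidableEq V] {k : ℕ} (A : Fin k → Finset (V × V)) (S : Finset V) :
    Prop :=
  ∃ B ρ, IsArborOn S B ρ ∧ IsRainbowOf A B

section Growth

variable [Fintype V] [DecidableEq V] {k : ℕ} {A : Fin k → Finset (V × V)} {r : Fin k → V}
  {S : Finset V} {B : Finset (V × V)} {ρ v : V} {c : V × V → Fin k}

lemma exists_insert_of_unused_root_mem (hA : ∀ i, IsSpanningArbor (A i) (r i))
    (harb : IsArborOn S B ρ) (hc : IsRainbowColoring A B c) (hv : v ∉ S) {i : Fin k}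
    (hi : r i ∈ S) (hiB : i ∉ B.image c) : ∃ w ∉ S, HasRainbowArborOn A (insert w S) := by
  obtain ⟨e, heA, he1, he2⟩ := (hA i).exists_arc_leaving hi (mem_univ v) hv
  exact ⟨e.2, he2, insert e B, ρ, harb.insert_leaf he1 he2, _,
    hc.insert (harb.notMem_of_snd_notMem he2) heA hiB⟩

lemma exists_insert_of_roots_mem_used (hA : ∀ i, IsSpanningArbor (A i) (r i))
    (hk : k + 1 = Fintype.card V) (hr : Set.InjOn r {i | r i ∉ S})
    (harb : IsArborOn S B ρ) (hc : IsRainbowColoring A B c) (hv : v ∉ S)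
    (hused : ∀ i, r i ∈ S → i ∈ B.image c) : ∃ w ∉ S, HasRainbowArborOn A (insert w S) := by
  have hcard : (B.image c).card + 1 = S.card := by
    rw [card_image_of_injOn hc.1]
    exact harb.card_add_one
  have hroots : ∀ e ∈ B, r (c e) ∈ S := fun e he => by
    have := mem_image_of_mem c he
    rw [← filter_root_mem_eq_of_card hk hr hcard hused, mem_filter] at this
    exact this.2
  obtain ⟨i, -, hi⟩ := exists_mem_notMem_of_card_lt_card (s := B.image c) (t := univ) (by
    have := card_lt_univ_of_notMem hv
    rw [card_univ, Fintype.card_fin]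
    omega)
  have hri : r i ∉ S := fun h => hi (hused i h)
  obtain ⟨t, htρ, htA⟩ := (hA i).exists_arc_into (mem_univ ρ) fun h => hri (h ▸ harb.1)
  have htρB : (t, ρ) ∉ B := fun h => harb.2.2.1 _ h rfl
  by_cases ht : t ∈ S
  · obtain ⟨b, hbB, harb'⟩ := harb.exists_swap_root ht htρ
    have hc' : IsRainbowColoring A (insert (t, ρ) (B.erase b)) (Function.update c (t, ρ) i) :=
      (hc.mono (erase_subset b B)).insert (fun h => htρB (mem_of_mem_erase h)) htA
        fun h => hi (image_subset_image (erase_subset b B) h)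
    obtain ⟨e, heA, he1, he2⟩ := (hA (c b)).exists_arc_leaving (hroots b hbB) (mem_univ v) hv
    have hcb : c b ∉ (insert (t, ρ) (B.erase b)).image (Function.update c (t, ρ) i) := by
      rw [IsRainbowColoring.image_update_insert fun h => htρB (mem_of_mem_erase h), mem_insert]
      rintro (h | h)
      · exact hi (h ▸ mem_image_of_mem c hbB)
      · obtain ⟨x, hx, hxb⟩ := mem_image.mp h
        exact ne_of_mem_erase hx (hc.1 (mem_of_mem_erase hx) hbB hxb)
    exact ⟨e.2, he2, _, t, harb'.insert_leaf he1 he2, _,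
      hc'.insert (harb'.notMem_of_snd_notMem he2) heA hcb⟩
  · exact ⟨t, ht, _, t, harb.insert_root ht, _, hc.insert htρB htA hi⟩

lemma HasRainbowArborOn.exists_insert (hA : ∀ i, IsSpanningArbor (A i) (r i))
    (hk : k + 1 = Fintype.card V) (hr : Set.InjOn r {i | r i ∉ S})
    (h : HasRainbowArborOn A S) (hv : v ∉ S) : ∃ w ∉ S, HasRainbowArborOn A (insert w S) := by
  obtain ⟨B, ρ, harb, c, hc⟩ := h
  by_cases hfree : ∃ i, r i ∈ S ∧ i ∉ B.image c
  · obtain ⟨i, hi, hiB⟩ := hfree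
    exact exists_insert_of_unused_root_mem hA harb hc hv hi hiB
  · push Not at hfree
    exact exists_insert_of_roots_mem_used hA hk hr harb hc hv hfree

theorem HasRainbowArborOn.spanning (hA : ∀ i, IsSpanningArbor (A i) (r i))
    (hk : k + 1 = Fintype.card V) {S : Finset V} {v₀ : V} (hr : Set.InjOn r {i | r i ≠ v₀}) (hv₀ : v₀ ∈ S)
    (h : HasRainbowArborOn A S) : HasRainbowArborOn A univ := by
  by_cases hS : ∀ v, v ∈ S
  · exact eq_univ_iff_forall.mpr hS ▸ h
  push Not at hS
  obtain ⟨v, hv⟩ := hS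
  obtain ⟨w, hw, h'⟩ := h.exists_insert hA hk (hr.mono fun i (hi : r i ∉ S) (hiv : r i = v₀) => hi (hiv ▸ hv₀)) hv
  exact h'.spanning hA hk hr (mem_insert_of_mem hv₀)
termination_by Sᶜ.card
decreasing_by
  rw [compl_insert]
  exact card_erase_lt_of_mem (mem_compl.mpr hw)

end Growth

theorem stmt16 [Fintype V] [DecidableEq V] (hn : 2 ≤ Fintype.card V)
    (A : Fin (Fintype.card V - 1) → Finset (V × V)) (r : Fin (Fintype.card V - 1) → V)
    (hA : ∀ i, IsSpanningArbor (A i) (r i))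
    (hmr : (Finset.univ.filter
      (fun v : V => 2 ≤ (Finset.univ.filter (fun i => r i = v)).card)).card ≤ 1) :
    ∃ (B : Finset (V × V)) (r' : V), IsSpanningArbor B r' ∧ IsRainbowOf A B := by
  have : Nonempty V := Fintype.card_pos_iff.mp (by omega)
  obtain ⟨v₀, hv₀⟩ := exists_injOn_root_ne hmr
  have hstart : HasRainbowArborOn A {v₀} :=
    ⟨∅, v₀, .singleton v₀, fun _ => ⟨0, by omega⟩, by simp, by simp⟩
  exact hstart.spanning hA (by omega) hv₀ (mem_singleton_self v₀)
end

section
/- Let G on vertex set V be the disjoint union of spanning arborescences (colors) A_1,...,A_k, let B̃ be an inclusion-wise maximal rainbow arborescence in G with vertex set Ṽ ⊊ V, and let i be a color with B̃ ∩ A_i = ∅. Then the root of A_i lies in V ∖ Ṽ, and the restriction of A_i to V ∖ Ṽ is an arborescence on V ∖ Ṽ. -/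
open Finset

variable {V : Type*}

/-! Since `A i` avoids the rainbow arborescence `B̃`, maximality of `B̃` means no arc of `A i`
leaves `Ṽ`: such an arc could be appended to `B̃` with the fresh color `i`. So `Ṽ` is closed
under `A i`; as `Ṽ ≠ V`, it cannot contain the root, and every path of `A i` from the root to a
vertex outside `Ṽ` stays outside `Ṽ`. -/

namespace Relation

variable {α : Type*} {R : α → α → Prop} {S : Set α} {a b : α}

theorem ReflTransGen.mem_of_forall_mem_imp (hS : ∀ x y, R x y → x ∈ S → y ∈ S)
    (h : ReflTransGen R a b) (ha : a ∈ S) : b ∈ S := by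
  induction h with
  | refl => exact ha
  | tail _ hxy ih => exact hS _ _ hxy ih

theorem ReflTransGen.restrict_compl_of_forall_mem_imp (hS : ∀ x y, R x y → x ∈ S → y ∈ S)
    (h : ReflTransGen R a b) (hb : b ∉ S) :
    ReflTransGen (fun x y => R x y ∧ x ∉ S ∧ y ∉ S) a b := by
  induction h with
  | refl => exact .refl
  | @tail x y _ hxy ih =>
    have hx : x ∉ S := fun hx => hb (hS _ _ hxy hx)
    exact (ih hx).tail ⟨hxy, hx, hb⟩

end Relation

section Arborescence

variable [DecidableEq V]

theorem IsRainbowOf.insert {k : ℕ} {A : Fin k → Finset (V × V)} {B : Finset (V × V)}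
    (hB : IsRainbowOf A B) {i : Fin k} (hi : Disjoint B (A i)) {e : V × V} (he : e ∈ A i) :
    IsRainbowOf A (insert e B) := by
  obtain ⟨c, hcinj, hcmem⟩ := hB
  have hne : ∀ x ∈ B, x ≠ e := fun x hx hxe => disjoint_left.mp hi hx (hxe ▸ he)
  have hci : ∀ x ∈ B, c x ≠ i := fun x hx hxi => disjoint_left.mp hi hx (hxi ▸ hcmem x hx)
  have heB : e ∉ (B : Set (V × V)) := fun heB => hne e heB rfl
  have hfc : Set.EqOn c (fun x => if x = e then i else c x) B :=
    fun x hx => (if_neg (hne x hx)).symm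
  refine ⟨fun x => if x = e then i else c x, ?_, ?_⟩
  · rw [coe_insert, Set.injOn_insert heB]
    refine ⟨hcinj.congr hfc, ?_⟩
    rintro ⟨x, hx, hxe⟩
    exact hci x hx (by simpa only [← hfc hx, if_pos rfl, if_true] using hxe)
  · intro x hx
    by_cases hxe : x = e
    · subst hxe
      simpa only [if_pos rfl, if_true] using he
    · simpa only [if_neg hxe] using hcmem x ((mem_insert.mp hx).resolve_left hxe)

theorem IsArborOn.insert_arc {U : Finset V} {B : Finset (V × V)} {r : V} {e : V × V}
    (hB : IsArborOn U B r) (he₁ : e.1 ∈ U) (he₂ : e.2 ∉ U) :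
    IsArborOn (insert e.2 U) (insert e B) r := by
  obtain ⟨hr, hBU, hBr, hBin, hBreach⟩ := hB
  have hBe : ∀ x ∈ B, x.2 ≠ e.2 := fun x hx h => he₂ (h ▸ (hBU x hx).2)
  refine ⟨mem_insert_of_mem hr, ?_, ?_, ?_, ?_⟩
  · simp only [forall_mem_insert]
    exact ⟨⟨mem_insert_of_mem he₁, mem_insert_self _ U⟩,
      fun x hx => ⟨mem_insert_of_mem (hBU x hx).1, mem_insert_of_mem (hBU x hx).2⟩⟩
  · simp only [forall_mem_insert]
    exact ⟨fun h => he₂ (h ▸ hr), hBr⟩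
  · intro w hw hwr
    rcases mem_insert.mp hw with rfl | hw
    · rw [filter_insert, if_pos rfl, filter_false_of_mem hBe]
      rfl
    · rw [filter_insert, if_neg (show e.2 ≠ w from fun h => he₂ (h ▸ hw))]
      exact hBin w hw hwr
  · have hmono : ∀ a b, (a, b) ∈ B → (a, b) ∈ insert e B := fun _ _ => mem_insert_of_mem
    intro w hw
    rcases mem_insert.mp hw with rfl | hw
    · exact (Relation.ReflTransGen.mono hmono _ _ (hBreach _ he₁)).tail (mem_insert_self e B)
    · exact Relation.ReflTransGen.mono hmono _ _ (hBreach w hw)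

theorem IsArborOn.snd_mem_of_maximal {k : ℕ} {A : Fin k → Finset (V × V)} {B : Finset (V × V)}
    {U : Finset V} {r : V} (hB : IsArborOn U B r) (hrb : IsRainbowOf A B)
    (hmax : ∀ (B' : Finset (V × V)) (U' : Finset V) (r' : V),
      IsRainbowOf A B' → IsArborOn U' B' r' → B ⊆ B' → B' = B)
    {i : Fin k} (hi : Disjoint B (A i)) {e : V × V} (he : e ∈ A i) (he₁ : e.1 ∈ U) :
    e.2 ∈ U := by
  by_contra he₂
  have hB' := hmax _ _ _ (hrb.insert hi he) (hB.insert_arc he₁ he₂) (subset_insert e B)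
  exact disjoint_left.mp hi (hB' ▸ mem_insert_self e B) he

variable {U S : Finset V} {A : Finset (V × V)} {r : V}

theorem IsArborOn.root_notMem_of_forall_mem_imp (hA : IsArborOn U A r)
    (hS : ∀ e ∈ A, e.1 ∈ S → e.2 ∈ S) (hUS : ¬U ⊆ S) : r ∉ S :=
  fun hr => hUS fun v hv =>
    (hA.2.2.2.2 v hv).mem_of_forall_mem_imp (S := (S : Set V)) (fun _ _ hxy => hS _ hxy) hr

theorem IsArborOn.restrict_sdiff_of_forall_mem_imp (hA : IsArborOn U A r)
    (hS : ∀ e ∈ A, e.1 ∈ S → e.2 ∈ S) (hr : r ∉ S) :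
    IsArborOn (U \ S) (A.filter fun e => e.1 ∉ S ∧ e.2 ∉ S) r := by
  obtain ⟨hrU, hAU, hAr, hAin, hAreach⟩ := hA
  refine ⟨mem_sdiff.mpr ⟨hrU, hr⟩, ?_, fun e he => hAr e (mem_filter.mp he).1, ?_, ?_⟩
  · intro e he
    obtain ⟨he, he₁, he₂⟩ := mem_filter.mp he
    exact ⟨mem_sdiff.mpr ⟨(hAU e he).1, he₁⟩, mem_sdiff.mpr ⟨(hAU e he).2, he₂⟩⟩
  · intro v hv hvr
    obtain ⟨hvU, hvS⟩ := mem_sdiff.mp hv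
    rw [filter_filter, ← hAin v hvU hvr]
    refine congrArg card
      (filter_congr fun e he => ⟨fun h => h.2, fun h => ⟨⟨?_, h ▸ hvS⟩, h⟩⟩)
    exact fun he₁ => hvS (h ▸ hS e he he₁)
  · intro v hv
    obtain ⟨hvU, hvS⟩ := mem_sdiff.mp hv
    simpa only [mem_filter, mem_coe] using
      (hAreach v hvU).restrict_compl_of_forall_mem_imp (S := (S : Set V))
        (fun _ _ hxy => hS _ hxy) hvS

end Arborescence

theorem stmt17 [Fintype V] [DecidableEq V]
    (k : ℕ) (A : Fin k → Finset (V × V)) (r : Fin k → V)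
    (hA : ∀ i, IsSpanningArbor (A i) (r i))
    (Bt : Finset (V × V)) (Vt : Finset V) (rt : V)
    (hBt : IsArborOn Vt Bt rt) (hrb : IsRainbowOf A Bt)
    (hmax : ∀ (B' : Finset (V × V)) (U' : Finset V) (r' : V),
      IsRainbowOf A B' → IsArborOn U' B' r' → Bt ⊆ B' → B' = Bt)
    (hVt : Vt ≠ Finset.univ)
    (i : Fin k) (hi : Disjoint Bt (A i)) :
    r i ∉ Vt ∧
    IsArborOn (Finset.univ \ Vt)
      ((A i).filter (fun e => e.1 ∉ Vt ∧ e.2 ∉ Vt)) (r i) := by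
  have hclosed : ∀ e ∈ A i, e.1 ∈ Vt → e.2 ∈ Vt :=
    fun e he he₁ => hBt.snd_mem_of_maximal hrb hmax hi he he₁
  have hroot : r i ∉ Vt :=
    (hA i).root_notMem_of_forall_mem_imp hclosed (univ_subset_iff.not.mpr hVt)
  exact ⟨hroot, (hA i).restrict_sdiff_of_forall_mem_imp hclosed hroot⟩
end
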